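/- arXiv:2404.04400 — 6 statements merged into one kernel-verified Lean document; each statement's English description precedes it below -/
import Mathlib

section
/- Let 1 ≤ p < 2 and let θ ∈ [0,1] satisfy either 0 ≤ θ < (1 − √(p−1))/2 or (1 + √(p−1))/2 < θ ≤ 1. Then there exist real numbers a, b ≥ 0 and c ∈ (0,1) such that a^p + b^p = 1 and, setting δ = ((1−c)/c)^{(2θ−1)/p}, one has (c(1−c))^{p/2} · ((a + b·δ⁻¹)^p + (a·δ + b)^p) > 1. -/
/-!
Write `(1 - c) / c = exp (2 v)`, so that `c (1 - c) = (2 cosh v)⁻²`, and `s = 2θ - 1`, so that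
`δ = exp (2 s v / p)`. Since `a δ + b = δ (a + b δ⁻¹)`, the bracket is
`(1 + δ ^ p) (a + b δ⁻¹) ^ p`, and the equality case of Hölder's inequality gives a unit vector
`(a, b)` of `ℓ^p` with `(a + b δ⁻¹) ^ p = (1 + δ ^ (-q)) ^ (p - 1)`, `q` the conjugate exponent.
Using `1 + exp (2 x) = 2 exp x cosh x`, the claim becomes
`cosh v ^ p < cosh (s v / (p - 1)) ^ (p - 1) cosh (s v)`. At `v = 0` both sides are
`1 + κ v² / 2 + O(v⁴)`, with `κ = p` on the left and `κ = p s² / (p - 1)` on the right, so the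
inequality holds for small `v` exactly when `s² > p - 1`.
For `p = 1` take `a = 1`, `b = 0` and `v = s`.
-/

open Real

lemma one_add_exp_two_mul (x : ℝ) : 1 + exp (2 * x) = 2 * exp x * cosh x := by
  rw [cosh_eq, exp_neg, two_mul, exp_add]
  field_simp
  ring

lemma one_add_sq_div_two_le_cosh (x : ℝ) : 1 + x ^ 2 / 2 ≤ cosh x := by
  have h := sum_le_hasSum (Finset.range 2)
    (fun n _ ↦ div_nonneg (by rw [pow_mul]; positivity) (by positivity)) (hasSum_cosh x)
  simpa [Finset.sum_range_succ] using h

lemma exp_sub_sq_le_one_add {y : ℝ} (hy : 0 ≤ y) : exp (y - y ^ 2) ≤ 1 + y :=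
  calc exp (y - y ^ 2) ≤ exp (2 * y / (y + 2)) := by
        gcongr
        rw [le_div_iff₀ (by linarith)]
        nlinarith [pow_nonneg hy 3]
    _ ≤ exp (log (1 + y)) := exp_le_exp.2 (le_log_one_add_of_nonneg hy)
    _ = 1 + y := exp_log (by linarith)

lemma exp_sub_le_cosh (x : ℝ) : exp (x ^ 2 / 2 - (x ^ 2 / 2) ^ 2) ≤ cosh x :=
  (exp_sub_sq_le_one_add (by positivity)).trans (one_add_sq_div_two_le_cosh x)

lemma exists_cosh_rpow_lt {p s : ℝ} (hp : 1 < p) (hs : p - 1 < s ^ 2) :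
    ∃ v, cosh v ^ p < cosh (s * v / (p - 1)) ^ (p - 1) * cosh (s * v) := by
  have hp1 : 0 < p - 1 := by linarith
  set f : ℝ → ℝ := fun x ↦ x ^ 2 / 2 - (x ^ 2 / 2) ^ 2
  set r := s / (p - 1) with hr
  set K := s ^ 2 + (p - 1) * r ^ 2 - p with hK_def
  set M := s ^ 4 + (p - 1) * r ^ 4 with hM_def
  have hK : 0 < K := by
    have : K = p * (s ^ 2 - (p - 1)) / (p - 1) := by rw [hK_def, hr]; field_simp; ring
    rw [this]
    exact div_pos (mul_pos (by linarith) (by linarith)) hp1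
  have hM : 0 < M := add_pos_of_pos_of_nonneg (by nlinarith) (by positivity)
  set v := √(K / M)
  have hv : v ^ 2 = K / M := sq_sqrt (div_pos hK hM).le
  -- `v ^ 2 = K / M` maximises the fourth-order lower bound `K v² / 2 - M v⁴ / 4` of the gap
  have gap : v ^ 2 / 2 * p < f (r * v) * (p - 1) + f (s * v) := by
    have expand : f (r * v) * (p - 1) + f (s * v) - v ^ 2 / 2 * p
        = K * v ^ 2 / 2 - M * (v ^ 2) ^ 2 / 4 := by
      simp only [f, hK_def, hM_def]; ring
    have optimum : K * v ^ 2 / 2 - M * (v ^ 2) ^ 2 / 4 = K ^ 2 / (4 * M) := by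
      rw [hv]; field_simp; ring
    have : 0 < K ^ 2 / (4 * M) := by positivity
    linarith
  refine ⟨v, ?_⟩
  calc cosh v ^ p ≤ exp (v ^ 2 / 2) ^ p := by gcongr; exact cosh_le_exp_half_sq v
    _ = exp (v ^ 2 / 2 * p) := (exp_mul _ _).symm
    _ < exp (f (r * v) * (p - 1) + f (s * v)) := exp_lt_exp.2 gap
    _ = exp (f (r * v)) ^ (p - 1) * exp (f (s * v)) := by rw [exp_add, exp_mul]
    _ ≤ cosh (r * v) ^ (p - 1) * cosh (s * v) := by
        gcongr <;> exact exp_sub_le_cosh _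
    _ = cosh (s * v / (p - 1)) ^ (p - 1) * cosh (s * v) := by
        rw [div_mul_eq_mul_div, mul_div_right_comm]

lemma one_sub_inv_one_add_div_inv {t : ℝ} (ht : 1 + t ≠ 0) :
    (1 - (1 + t)⁻¹) / (1 + t)⁻¹ = t := by
  field_simp
  ring

lemma inv_one_add_exp_mul_one_sub_rpow (p v : ℝ) :
    ((1 + exp (2 * v))⁻¹ * (1 - (1 + exp (2 * v))⁻¹)) ^ (p / 2) = ((2 * cosh v) ^ p)⁻¹ := by
  have hc : 0 < 2 * cosh v := by positivity
  have h : (1 + exp (2 * v))⁻¹ * (1 - (1 + exp (2 * v))⁻¹) = ((2 * cosh v) ^ (2 : ℝ))⁻¹ := by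
    have hsq : exp (2 * v) = exp v ^ 2 := by rw [sq, ← exp_add, two_mul]
    rw [rpow_two]
    field_simp
    rw [add_sub_cancel_left, one_add_exp_two_mul, hsq]
    ring
  rw [h, inv_rpow (by positivity), ← rpow_mul hc.le]
  ring_nf

lemma add_mul_inv_rpow_add_mul_add_rpow {a b δ : ℝ} (p : ℝ) (ha : 0 ≤ a) (hb : 0 ≤ b)
    (hδ : 0 < δ) :
    (a + b * δ⁻¹) ^ p + (a * δ + b) ^ p = (a + b * δ⁻¹) ^ p * (1 + δ ^ p) := by
  have : a * δ + b = δ * (a + b * δ⁻¹) := by field_simp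
  rw [this, mul_rpow hδ.le (by positivity)]
  ring

lemma exists_rpow_add_rpow_eq_one_and_add_mul_rpow_eq {p y : ℝ} (hp : 1 < p) (hy : 0 ≤ y) :
    ∃ a b : ℝ, 0 ≤ a ∧ 0 ≤ b ∧ a ^ p + b ^ p = 1 ∧
      (a + b * y) ^ p = (1 + y ^ (p / (p - 1))) ^ (p - 1) := by
  have hp0 : p ≠ 0 := by positivity
  have hp1 : 0 < p - 1 := by linarith
  set N := 1 + y ^ (p / (p - 1)) with hN_def
  have hN : 0 < N := by positivity
  have hNp : (N ^ (-p⁻¹)) ^ p = N⁻¹ := by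
    rw [← rpow_mul hN.le, neg_mul, inv_mul_cancel₀ hp0, rpow_neg_one]
  have hyy : y ^ (p - 1)⁻¹ * y = y ^ (p / (p - 1)) := by
    rw [← rpow_add_one' hy (add_pos (inv_pos.2 hp1) one_pos).ne']
    congr 1
    field_simp
    ring
  refine ⟨N ^ (-p⁻¹), y ^ (p - 1)⁻¹ * N ^ (-p⁻¹), by positivity, by positivity, ?_, ?_⟩
  · rw [mul_rpow (by positivity) (by positivity), ← rpow_mul hy, hNp, inv_mul_eq_div,
      ← one_add_mul, ← hN_def, mul_inv_cancel₀ hN.ne']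
  · have hsum : N ^ (-p⁻¹) + y ^ (p - 1)⁻¹ * N ^ (-p⁻¹) * y = N ^ (-p⁻¹) * N := by
      rw [hN_def, ← hyy]; ring
    rw [hsum, ← rpow_add_one hN.ne', ← rpow_mul hN.le]
    congr 1
    field_simp
    ring

lemma one_add_exp_rpow_mul_one_add_exp {p : ℝ} (hp : 1 < p) (x : ℝ) :
    (1 + exp (2 * (-x / (p - 1)))) ^ (p - 1) * (1 + exp (2 * x)) =
      2 ^ p * (cosh (x / (p - 1)) ^ (p - 1) * cosh x) := by
  have hp1 : 0 < p - 1 := by linarith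
  have h2 : (2 : ℝ) ^ p = 2 ^ (p - 1) * 2 := by rw [← rpow_add_one two_ne_zero]; ring_nf
  rw [one_add_exp_two_mul, one_add_exp_two_mul, mul_rpow (by positivity) (cosh_pos _).le,
    mul_rpow two_pos.le (exp_pos _).le, ← exp_mul, div_mul_cancel₀ _ hp1.ne', neg_div, cosh_neg,
    exp_neg, h2]
  field_simp

lemma exists_cosh_lt_add_rpow_of_one_lt {p s : ℝ} (hp : 1 < p) (hs : p - 1 < s ^ 2) :
    ∃ v a b : ℝ, 0 ≤ a ∧ 0 ≤ b ∧ a ^ p + b ^ p = 1 ∧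
      (2 * cosh v) ^ p <
        (a + b * (exp (2 * v) ^ (s / p))⁻¹) ^ p + (a * exp (2 * v) ^ (s / p) + b) ^ p := by
  obtain ⟨v, hv⟩ := exists_cosh_rpow_lt hp hs
  obtain ⟨a, b, ha, hb, hab, hmax⟩ :=
    exists_rpow_add_rpow_eq_one_and_add_mul_rpow_eq hp (inv_nonneg.2 (exp_pos (2 * v * (s / p))).le)
  refine ⟨v, a, b, ha, hb, hab, ?_⟩
  rw [← exp_mul, add_mul_inv_rpow_add_mul_add_rpow p ha hb (exp_pos _), hmax, ← exp_neg,
    ← exp_mul, ← exp_mul, show -(2 * v * (s / p)) * (p / (p - 1)) = 2 * (-(s * v) / (p - 1)) by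
      field_simp, show 2 * v * (s / p) * p = 2 * (s * v) by field_simp,
    one_add_exp_rpow_mul_one_add_exp hp, mul_rpow two_pos.le (cosh_pos v).le]
  exact mul_lt_mul_of_pos_left hv (by positivity)

lemma cosh_lt_exp_mul_cosh {s : ℝ} (hs : s ≠ 0) : cosh s < exp (s * s) * cosh (s * s) :=
  calc cosh s ≤ exp (s ^ 2 / 2) := cosh_le_exp_half_sq s
    _ < exp (s * s) := exp_lt_exp.2 (by nlinarith [sq_pos_of_ne_zero hs])
    _ ≤ exp (s * s) * cosh (s * s) := le_mul_of_one_le_right (exp_pos _).le (one_le_cosh _)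

theorem stmt_0_general (p θ : ℝ) (hp1 : 1 ≤ p)
    (hθ : θ < (1 - Real.sqrt (p - 1)) / 2 ∨ (1 + Real.sqrt (p - 1)) / 2 < θ) :
    ∃ a b c : ℝ, 0 ≤ a ∧ 0 ≤ b ∧ 0 < c ∧ c < 1 ∧ a ^ p + b ^ p = 1 ∧
      1 < (c * (1 - c)) ^ (p / 2) *
        ((a + b * (((1 - c) / c) ^ ((2 * θ - 1) / p))⁻¹) ^ p +
          (a * ((1 - c) / c) ^ ((2 * θ - 1) / p) + b) ^ p) := by
  set s := 2 * θ - 1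
  have hs : p - 1 < s ^ 2 := by
    rw [← sq_abs]
    exact lt_sq_of_sqrt_lt (lt_abs.2 (by rcases hθ with h | h <;> [right; left] <;> linarith))
  obtain ⟨v, a, b, ha, hb, hab, hlt⟩ : ∃ v a b : ℝ, 0 ≤ a ∧ 0 ≤ b ∧ a ^ p + b ^ p = 1 ∧
      (2 * cosh v) ^ p <
        (a + b * (exp (2 * v) ^ (s / p))⁻¹) ^ p + (a * exp (2 * v) ^ (s / p) + b) ^ p := by
    rcases hp1.eq_or_lt with rfl | hp
    · refine ⟨s, 1, 0, zero_le_one, le_rfl, by simp, ?_⟩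
      have hs0 : s ≠ 0 := by rintro hs0; simp [hs0] at hs
      simp only [rpow_one, div_one, zero_mul, add_zero, one_mul, ← exp_mul, mul_assoc,
        one_add_exp_two_mul]
      linarith [cosh_lt_exp_mul_cosh hs0]
    · exact exists_cosh_lt_add_rpow_of_one_lt hp hs
  have ht : 0 < 1 + exp (2 * v) := by positivity
  refine ⟨a, b, (1 + exp (2 * v))⁻¹, ha, hb, inv_pos.2 ht,
    inv_lt_one_of_one_lt₀ (by linarith [exp_pos (2 * v)]), hab, ?_⟩
  rw [one_sub_inv_one_add_div_inv ht.ne', inv_one_add_exp_mul_one_sub_rpow, inv_mul_eq_div,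
    one_lt_div (by positivity)]
  exact hlt

/-- Let `1 ≤ p < 2` and let `θ ∈ [0,1]` satisfy either
`0 ≤ θ < (1 − √(p−1))/2` or `(1 + √(p−1))/2 < θ ≤ 1`.  Then there exist real numbers
`a, b ≥ 0` and `c ∈ (0,1)` such that `a^p + b^p = 1` and, setting
`δ = ((1−c)/c)^((2θ−1)/p)`, one has
`(c(1−c))^(p/2) · ((a + b·δ⁻¹)^p + (a·δ + b)^p) > 1`. -/
theorem stmt_0 (p θ : ℝ) (hp1 : 1 ≤ p) (hp2 : p < 2) (hθ0 : 0 ≤ θ) (hθ1 : θ ≤ 1)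
    (hθ : θ < (1 - Real.sqrt (p - 1)) / 2 ∨ (1 + Real.sqrt (p - 1)) / 2 < θ) :
    ∃ a b c : ℝ, 0 ≤ a ∧ 0 ≤ b ∧ 0 < c ∧ c < 1 ∧ a ^ p + b ^ p = 1 ∧
      1 < (c * (1 - c)) ^ (p / 2) *
        ((a + b * (((1 - c) / c) ^ ((2 * θ - 1) / p))⁻¹) ^ p +
          (a * ((1 - c) / c) ^ ((2 * θ - 1) / p) + b) ^ p) :=
  stmt_0_general p θ hp1 hθ
end

section
/- Let 1 < p < 2 with conjugate exponent q = p/(p−1), and let δ > 0. Define a = (δ^q/(1+δ^q))^{1/p} and b = (1/(1+δ^q))^{1/p}. Then a^p + b^p = 1 and (a + b·δ⁻¹)^p + (a·δ + b)^p = (1 + δ^{−p})·(1 + δ^q)^{p−1}. -/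
open Real

/- For conjugate exponents `q / p + 1 = q`, so `a δ = δ ^ q / D ^ (1 / p)` with `D = 1 + δ ^ q`,
whence `a δ + b = D ^ (1 - 1 / p) = D ^ (1 / q)`. Since `a + b δ⁻¹ = δ⁻¹ (a δ + b)`, the left-hand
side is `(1 + δ ^ (-p)) D ^ (p / q)`, and `p / q = p - 1`. -/

theorem Real.HolderConjugate.rpow_div_one_add_rpow_mul_add {p q x : ℝ}
    (hpq : p.HolderConjugate q) (hx : 0 < x) :
    (x ^ q / (1 + x ^ q)) ^ (1 / p) * x + (1 / (1 + x ^ q)) ^ (1 / p) =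
      (1 + x ^ q) ^ (1 / q) := by
  have hxq : 0 < x ^ q := rpow_pos_of_pos hx q
  have hD : 0 < 1 + x ^ q := by linarith
  have hxqp : x ^ (q / p) * x = x ^ q := by
    rw [← rpow_add_one hx.ne', hpq.symm.div_conj_eq_sub_one, sub_add_cancel]
  calc (x ^ q / (1 + x ^ q)) ^ (1 / p) * x + (1 / (1 + x ^ q)) ^ (1 / p)
      = (x ^ (q / p) * x + 1) / (1 + x ^ q) ^ (1 / p) := by
        rw [div_rpow hxq.le hD.le, div_rpow zero_le_one hD.le, one_rpow, ← rpow_mul hx.le,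
          mul_one_div]
        ring
    _ = (1 + x ^ q) ^ (1 - 1 / p) := by
        rw [hxqp, rpow_sub hD, rpow_one, add_comm]
    _ = (1 + x ^ q) ^ (1 / q) := by
        rw [one_div, one_div, hpq.one_sub_inv]

theorem stmt_1_general (p q δ a b : ℝ) (hp1 : 1 < p) (hq : q = p / (p - 1))
    (hδ : 0 < δ)
    (ha : a = (δ ^ q / (1 + δ ^ q)) ^ (1 / p))
    (hb : b = (1 / (1 + δ ^ q)) ^ (1 / p)) :
    a ^ p + b ^ p = 1 ∧
      (a + b * δ⁻¹) ^ p + (a * δ + b) ^ p = (1 + δ ^ (-p)) * (1 + δ ^ q) ^ (p - 1) := by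
  have hpq : p.HolderConjugate q := (holderConjugate_iff_eq_conjExponent hp1).2 hq
  have hD : 0 < 1 + δ ^ q := by positivity
  refine ⟨?_, ?_⟩
  · rw [ha, hb, one_div p, rpow_inv_rpow (by positivity) hpq.ne_zero,
      rpow_inv_rpow (by positivity) hpq.ne_zero]
    field_simp
    ring
  · have hsum : a * δ + b = (1 + δ ^ q) ^ (1 / q) := ha ▸ hb ▸ hpq.rpow_div_one_add_rpow_mul_add hδ
    have hsum_nonneg : 0 ≤ a * δ + b := hsum ▸ by positivity
    calc (a + b * δ⁻¹) ^ p + (a * δ + b) ^ p = (δ⁻¹ * (a * δ + b)) ^ p + (a * δ + b) ^ p := by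
          congr 2; field_simp
      _ = (1 + δ ^ (-p)) * (a * δ + b) ^ p := by
          rw [mul_rpow (by positivity) hsum_nonneg, inv_rpow hδ.le, rpow_neg hδ.le]
          ring
      _ = (1 + δ ^ (-p)) * (1 + δ ^ q) ^ (p - 1) := by
          rw [hsum, ← rpow_mul hD.le, one_div_mul_eq_div, hpq.div_conj_eq_sub_one]

/-- Let `1 < p < 2` with conjugate exponent `q = p/(p−1)`, and let
`δ > 0`.  Define `a = (δ^q/(1+δ^q))^(1/p)` and `b = (1/(1+δ^q))^(1/p)`.  Then
`a^p + b^p = 1` and `(a + b·δ⁻¹)^p + (a·δ + b)^p = (1 + δ^(−p))·(1 + δ^q)^(p−1)`. -/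
theorem stmt_1 (p q δ a b : ℝ) (hp1 : 1 < p) (hp2 : p < 2) (hq : q = p / (p - 1))
    (hδ : 0 < δ)
    (ha : a = (δ ^ q / (1 + δ ^ q)) ^ (1 / p))
    (hb : b = (1 / (1 + δ ^ q)) ^ (1 / p)) :
    a ^ p + b ^ p = 1 ∧
      (a + b * δ⁻¹) ^ p + (a * δ + b) ^ p = (1 + δ ^ (-p)) * (1 + δ ^ q) ^ (p - 1) :=
  stmt_1_general p q δ a b hp1 hq hδ ha hb
end

section
/- Let 1 < p < 2 with conjugate exponent q = p/(p−1), and let θ ∈ [0,1] satisfy either 0 ≤ θ < (1 − √(p−1))/2 or (1 + √(p−1))/2 < θ ≤ 1. Then there exists c ∈ (0,1) such that, setting δ = ((1−c)/c)^{(2θ−1)/p}, one has (c(1−c))^{p/2} · (1 + δ^{−p}) · (1 + δ^q)^{p−1} > 1. -/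
/-!
Put `c = 1/(1 + eᵘ)`, so that `(1 - c)/c = eᵘ`, and write `a = 2θ - 1`. The logarithm of the
left-hand side becomes `g(u) = -(p/2)(s(u) + s(-u)) + s(-au) + (p-1) s(au/(p-1))` with the
softplus function `s(x) = log(1 + eˣ)`, whose derivative is the sigmoid `σ`. One checks
`g(0) = g'(0) = 0` and `g''(0) = (a² - (p-1)) p / (4(p-1))`, which is positive exactly under the
hypothesis on `θ`; so `g(u) > 0` for small `u > 0`.
-/

open Real Filter Set Topology

lemma exists_gt_apply_lt_of_hasDerivAt_deriv_pos {f f' : ℝ → ℝ} {x₀ K : ℝ}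
    (hf : ∀ x, HasDerivAt f (f' x) x) (hf'x₀ : f' x₀ = 0) (hf' : HasDerivAt f' K x₀)
    (hK : 0 < K) : ∃ x, x₀ < x ∧ f x₀ < f x := by
  have hderiv : deriv f = f' := funext fun x => (hf x).deriv
  have hpos : ∀ᶠ x in 𝓝[>] x₀, 0 < deriv f x := by
    refine deriv_pos_right_of_sign_deriv (nhdsWithin_le_nhds ?_)
    refine eventually_nhdsWithin_sign_eq_of_deriv_pos ?_ ?_
    · rwa [hderiv, hf'.deriv]
    · rwa [hderiv]
  obtain ⟨b, hx₀b, hsub⟩ := mem_nhdsGT_iff_exists_Ioo_subset.mp hpos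
  obtain ⟨x, hx₀x, hxb⟩ := exists_between (α := ℝ) hx₀b
  have hmono : StrictMonoOn f (Icc x₀ x) := by
    refine strictMonoOn_of_deriv_pos (convex_Icc x₀ x)
      (fun y _ => (hf y).continuousAt.continuousWithinAt) fun y hy => hsub ?_
    rw [interior_Icc] at hy
    exact ⟨hy.1, hy.2.trans hxb⟩
  exact ⟨x, hx₀x, hmono (left_mem_Icc.mpr hx₀x.le) (right_mem_Icc.mpr hx₀x.le) hx₀x⟩

noncomputable def softplus (x : ℝ) : ℝ := log (1 + exp x)

lemma exp_softplus (x : ℝ) : exp (softplus x) = 1 + exp x :=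
  exp_log (by positivity)

lemma sigmoid_eq_exp_neg_softplus_neg (x : ℝ) : sigmoid x = exp (-softplus (-x)) := by
  rw [exp_neg, exp_softplus, sigmoid_def]

lemma hasDerivAt_softplus (x : ℝ) : HasDerivAt softplus (sigmoid x) x := by
  have h := ((hasDerivAt_exp x).const_add 1).log (by positivity)
  refine h.congr_deriv ?_
  rw [sigmoid_def, exp_neg]
  field_simp
  ring

lemma hasDerivAt_softplus_const_mul (k x : ℝ) :
    HasDerivAt (fun x => softplus (k * x)) (k * sigmoid (k * x)) x := by
  simpa [mul_comm, Function.comp_def] using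
    (hasDerivAt_softplus (k * x)).comp x ((hasDerivAt_id x).const_mul k)

lemma hasDerivAt_sigmoid_const_mul (k x : ℝ) :
    HasDerivAt (fun x => sigmoid (k * x)) (k * (sigmoid (k * x) * (1 - sigmoid (k * x)))) x := by
  simpa [mul_comm, Function.comp_def] using
    (hasDerivAt_sigmoid (k * x)).comp x ((hasDerivAt_id x).const_mul k)

noncomputable def logObjective (p a u : ℝ) : ℝ :=
  -(p / 2) * (softplus u + softplus (-u)) + softplus (-a * u)
    + (p - 1) * softplus (a / (p - 1) * u)

lemma logObjective_zero (p a : ℝ) : logObjective p a 0 = 0 := by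
  simp only [logObjective, mul_zero, neg_zero]
  ring

lemma hasDerivAt_logObjective {p : ℝ} (hp : p ≠ 1) (a u : ℝ) :
    HasDerivAt (logObjective p a)
      (-(p / 2) * (sigmoid u - sigmoid (-u)) - a * sigmoid (-a * u)
        + a * sigmoid (a / (p - 1) * u)) u := by
  have hsym := (hasDerivAt_softplus u).add ((hasDerivAt_softplus (-u)).comp u (hasDerivAt_neg u))
  refine (((hsym.const_mul _).add (hasDerivAt_softplus_const_mul (-a) u)).add
    ((hasDerivAt_softplus_const_mul (a / (p - 1)) u).const_mul (p - 1))).congr_deriv ?_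
  have : p - 1 ≠ 0 := sub_ne_zero.mpr hp
  field_simp
  ring

lemma hasDerivAt_deriv_logObjective_zero (p a : ℝ) :
    HasDerivAt (fun u => -(p / 2) * (sigmoid u - sigmoid (-u)) - a * sigmoid (-a * u)
        + a * sigmoid (a / (p - 1) * u))
      ((a ^ 2 + a ^ 2 / (p - 1) - p) / 4) 0 := by
  have hsym := (hasDerivAt_sigmoid 0).sub ((hasDerivAt_sigmoid (-0)).comp 0 (hasDerivAt_neg 0))
  refine (((hsym.const_mul _).sub ((hasDerivAt_sigmoid_const_mul (-a) 0).const_mul a)).add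
    ((hasDerivAt_sigmoid_const_mul (a / (p - 1)) 0).const_mul a)).congr_deriv ?_
  simp only [neg_zero, mul_zero, sigmoid_zero]
  ring

lemma exists_pos_logObjective_pos {p a : ℝ} (hp : 1 < p) (ha : p - 1 < a ^ 2) :
    ∃ u, 0 < u ∧ 0 < logObjective p a u := by
  have hp1 : 0 < p - 1 := sub_pos.mpr hp
  have hK : 0 < (a ^ 2 + a ^ 2 / (p - 1) - p) / 4 := by
    have : a ^ 2 + a ^ 2 / (p - 1) - p = (a ^ 2 - (p - 1)) * p / (p - 1) := by field_simp; ring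
    rw [this]
    have := sub_pos.mpr ha
    positivity
  obtain ⟨u, hu, hlt⟩ := exists_gt_apply_lt_of_hasDerivAt_deriv_pos
    (hasDerivAt_logObjective hp.ne' a) (by simp) (hasDerivAt_deriv_logObjective_zero p a) hK
  refine ⟨u, hu, ?_⟩
  rwa [logObjective_zero] at hlt

lemma objective_sigmoid_neg_eq_exp_logObjective {p q : ℝ} (hp : p ≠ 0)
    (hq : q = p / (p - 1)) (a u : ℝ) :
    (sigmoid (-u) * (1 - sigmoid (-u))) ^ (p / 2)
        * (1 + (((1 - sigmoid (-u)) / sigmoid (-u)) ^ (a / p)) ^ (-p))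
        * (1 + (((1 - sigmoid (-u)) / sigmoid (-u)) ^ (a / p)) ^ q) ^ (p - 1)
      = exp (logObjective p a u) := by
  have hcompl : 1 - sigmoid (-u) = sigmoid u := by rw [sigmoid_neg]; ring
  have hratio : (1 - sigmoid (-u)) / sigmoid (-u) = exp u := by
    rw [hcompl, ← sigmoid_mul_rexp_neg u, exp_neg]
    field_simp [(sigmoid_pos u).ne']
  have hneg : (exp u ^ (a / p)) ^ (-p) = exp (-a * u) := by
    rw [← exp_mul, ← exp_mul]
    congr 1
    field_simp
  have hconj : (exp u ^ (a / p)) ^ q = exp (a / (p - 1) * u) := by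
    rw [← exp_mul, ← exp_mul, hq]
    congr 1
    field_simp
  rw [hratio, hneg, hconj, hcompl, sigmoid_eq_exp_neg_softplus_neg,
    sigmoid_eq_exp_neg_softplus_neg, neg_neg, ← exp_add, ← exp_softplus, ← exp_softplus,
    ← exp_mul, ← exp_mul, ← exp_add, ← exp_add, logObjective]
  congr 1
  ring

theorem stmt_2_general (p q θ : ℝ) (hp1 : 1 < p) (hq : q = p / (p - 1))
    (hθ : θ < (1 - Real.sqrt (p - 1)) / 2 ∨ (1 + Real.sqrt (p - 1)) / 2 < θ) :
    ∃ c : ℝ, 0 < c ∧ c < 1 ∧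
      1 < (c * (1 - c)) ^ (p / 2) * (1 + (((1 - c) / c) ^ ((2 * θ - 1) / p)) ^ (-p)) *
        (1 + (((1 - c) / c) ^ ((2 * θ - 1) / p)) ^ q) ^ (p - 1) := by
  have ha : p - 1 < (2 * θ - 1) ^ 2 := by
    rcases hθ with h | h
    · convert lt_sq_of_sqrt_lt (y := 1 - 2 * θ) (by linarith) using 1
      ring
    · exact lt_sq_of_sqrt_lt (by linarith)
  obtain ⟨u, -, hu⟩ := exists_pos_logObjective_pos hp1 ha
  refine ⟨sigmoid (-u), sigmoid_pos _, sigmoid_lt_one _, ?_⟩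
  rw [objective_sigmoid_neg_eq_exp_logObjective (by linarith) hq]
  exact one_lt_exp_iff.mpr hu

/-- Let `1 < p < 2` with conjugate exponent `q = p/(p−1)`, and let
`θ ∈ [0,1]` satisfy either `0 ≤ θ < (1 − √(p−1))/2` or `(1 + √(p−1))/2 < θ ≤ 1`.  Then
there exists `c ∈ (0,1)` such that, setting `δ = ((1−c)/c)^((2θ−1)/p)`, one has
`(c(1−c))^(p/2) · (1 + δ^(−p)) · (1 + δ^q)^(p−1) > 1`. -/
theorem stmt_2 (p q θ : ℝ) (hp1 : 1 < p) (hp2 : p < 2) (hq : q = p / (p - 1))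
    (hθ0 : 0 ≤ θ) (hθ1 : θ ≤ 1)
    (hθ : θ < (1 - Real.sqrt (p - 1)) / 2 ∨ (1 + Real.sqrt (p - 1)) / 2 < θ) :
    ∃ c : ℝ, 0 < c ∧ c < 1 ∧
      1 < (c * (1 - c)) ^ (p / 2) * (1 + (((1 - c) / c) ^ ((2 * θ - 1) / p)) ^ (-p)) *
        (1 + (((1 - c) / c) ^ ((2 * θ - 1) / p)) ^ q) ^ (p - 1) :=
  stmt_2_general p q θ hp1 hq hθ
end

section
/- Let θ ∈ [0,1] with θ ≠ 1/2. Then there exists c ∈ (0,1) such that (c(1−c))^{1/2} · (1 + ((1−c)/c)^{2θ−1}) > 1. -/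
/-! Put `t = 2θ - 1 ≠ 0` and `c = 1 / (1 + eᵗ)`, so that `(1 - c) / c = eᵗ` and
`√(c (1 - c)) = 1 / (2 cosh (t / 2))`. The claim becomes `2 cosh (t / 2) < 1 + e^{t²}`, which
follows from `cosh x ≤ e^{x²/2}` and `1 + e^s ≥ 2 e^{s/2}`. -/

open Real

lemma two_mul_exp_half_le_one_add_exp (s : ℝ) : 2 * exp (s / 2) ≤ 1 + exp s := by
  have h : exp s = exp (s / 2) ^ 2 := by rw [← exp_nat_mul]; ring_nf
  nlinarith [sq_nonneg (exp (s / 2) - 1)]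

lemma two_mul_cosh_half_lt_one_add_exp_mul_self {t : ℝ} (ht : t ≠ 0) :
    2 * cosh (t / 2) < 1 + exp (t * t) := by
  have htt : 0 < t * t := mul_self_pos.2 ht
  calc 2 * cosh (t / 2) ≤ 2 * exp ((t / 2) ^ 2 / 2) := by gcongr; exact cosh_le_exp_half_sq _
    _ < 2 * exp (t * t / 2) := by gcongr; nlinarith
    _ ≤ 1 + exp (t * t) := two_mul_exp_half_le_one_add_exp _

lemma one_sub_inv_one_add_exp_div (x : ℝ) :
    (1 - (1 + exp x)⁻¹) / (1 + exp x)⁻¹ = exp x := by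
  field_simp
  ring

lemma rpow_half_inv_one_add_exp_mul_one_sub (x : ℝ) :
    ((1 + exp x)⁻¹ * (1 - (1 + exp x)⁻¹)) ^ ((1 : ℝ) / 2) = (2 * cosh (x / 2))⁻¹ := by
  have hx : exp x = exp (x / 2) ^ 2 := by rw [← exp_nat_mul]; ring_nf
  have hneg : exp (-(x / 2)) = (exp (x / 2))⁻¹ := exp_neg _
  have hsq : (1 + exp x)⁻¹ * (1 - (1 + exp x)⁻¹) = ((2 * cosh (x / 2))⁻¹) ^ 2 := by
    rw [cosh_eq, hneg, hx]
    field_simp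
    ring
  rw [hsq, ← sqrt_eq_rpow, sqrt_sq (by positivity)]

theorem stmt_3_general (θ : ℝ) (hθ : θ ≠ 1 / 2) :
    ∃ c : ℝ, 0 < c ∧ c < 1 ∧
      1 < (c * (1 - c)) ^ ((1 : ℝ) / 2) * (1 + ((1 - c) / c) ^ (2 * θ - 1)) := by
  set t := 2 * θ - 1
  have ht : t ≠ 0 := fun h ↦ hθ (by linarith)
  refine ⟨(1 + exp t)⁻¹, by positivity, inv_lt_one_of_one_lt₀ (by linarith [exp_pos t]), ?_⟩
  rw [rpow_half_inv_one_add_exp_mul_one_sub, one_sub_inv_one_add_exp_div, ← exp_mul,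
    inv_mul_eq_div, one_lt_div (by positivity)]
  exact two_mul_cosh_half_lt_one_add_exp_mul_self ht

/-- Let `θ ∈ [0,1]` with `θ ≠ 1/2`.  Then there exists `c ∈ (0,1)`
such that `(c(1−c))^(1/2) · (1 + ((1−c)/c)^(2θ−1)) > 1`. -/
theorem stmt_3 (θ : ℝ) (hθ0 : 0 ≤ θ) (hθ1 : θ ≤ 1) (hθ : θ ≠ 1 / 2) :
    ∃ c : ℝ, 0 < c ∧ c < 1 ∧
      1 < (c * (1 - c)) ^ ((1 : ℝ) / 2) * (1 + ((1 - c) / c) ^ (2 * θ - 1)) :=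
  stmt_3_general θ hθ
end

section
/- Let 1 < p < 2 with conjugate exponent q = p/(p−1), let θ ∈ [0,1] and set λ = 2θ − 1. For t ∈ (−1/2, 1/2) set δ_t = ((1 − 2t)/(1 + 2t))^{λ/p}. Then (1 + δ_t^q)^{p−1} = 2^{p/q}·(1 − 2λ·t + 2λ²q·t²) + o(t²) as t → 0. -/
/-!
Write `u t = (1 - 2t)/(1 + 2t)` and `r = λ/(p - 1)`. Since `(λ/p)·q = r`, the left-hand side
is `F t = (1 + (u t)^r)^(p-1)`, smooth near `0` with `u 0 = 1`, `u' 0 = -4`, `u'' 0 = 16`.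
Hence `F 0 = 2^(p-1)`, `F' 0 = -2λ·2^(p-1)` and `F'' 0 = 4p(p-1)r²·2^(p-1) = 4λ²q·2^(p-1)`,
and the claim is the second-order Taylor expansion of `F` with Peano remainder, obtained from
the first-order expansion of `F'` by the mean value inequality.
-/

open Filter Asymptotics Topology

theorem isLittleO_sub_taylor_two_of_hasDerivAt {E : Type*} [NormedAddCommGroup E]
    [NormedSpace ℝ E] {f g : ℝ → E} {x₀ : ℝ} {c : E}
    (hf : ∀ᶠ x in 𝓝 x₀, HasDerivAt f (g x) x) (hg : HasDerivAt g c x₀) :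
    (fun x => f x - (f x₀ + (x - x₀) • g x₀ + ((x - x₀) ^ 2 / 2) • c))
      =o[𝓝 x₀] fun x => (x - x₀) ^ 2 := by
  obtain ⟨ε, hε, hball⟩ := Metric.eventually_nhds_iff_ball.mp hf
  have hnhds : 𝓝[Metric.ball x₀ ε] x₀ = 𝓝 x₀ :=
    nhdsWithin_eq_nhds.mpr (Metric.ball_mem_nhds x₀ hε)
  have hpoly (x : ℝ) : HasDerivAt (fun x => f x₀ + (x - x₀) • g x₀ + ((x - x₀) ^ 2 / 2) • c)
      (g x₀ + (x - x₀) • c) x := by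
    have h1 := ((hasDerivAt_id x).sub_const x₀).smul_const (g x₀)
    have h2 := ((((hasDerivAt_id x).sub_const x₀).pow 2).div_const 2).smul_const c
    convert (h1.const_add (f x₀)).add h2 using 2 <;> simp
  have hg' : (fun x => g x - (g x₀ + (x - x₀) • c)) =o[𝓝[Metric.ball x₀ ε] x₀]
      fun x => (x - x₀) ^ 1 := by
    simpa [hnhds, sub_sub] using hasDerivAt_iff_isLittleO.mp hg
  have key := (convex_ball x₀ ε).isLittleO_pow_succ_real (Metric.mem_ball_self hε)
    (fun x hx => ((hball x hx).sub (hpoly x)).hasDerivWithinAt) hg'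
  rw [hnhds] at key
  simpa using key

lemma hasDerivAt_ratio {t : ℝ} (ht : 1 + 2 * t ≠ 0) :
    HasDerivAt (fun x : ℝ => (1 - 2 * x) / (1 + 2 * x)) (-4 / (1 + 2 * t) ^ 2) t := by
  have h1 := ((hasDerivAt_id t).const_mul 2).const_sub 1
  have h2 := ((hasDerivAt_id t).const_mul 2).const_add 1
  refine (h1.div h2 ht).congr_deriv ?_
  simp only [id]
  field_simp
  ring

lemma hasDerivAt_ratio_rpow (s : ℝ) {t : ℝ} (ht : (1 - 2 * t) / (1 + 2 * t) ≠ 0) :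
    HasDerivAt (fun x : ℝ => ((1 - 2 * x) / (1 + 2 * x)) ^ s)
      (s * ((1 - 2 * t) / (1 + 2 * t)) ^ (s - 1) * (-4 / (1 + 2 * t) ^ 2)) t := by
  have hden : 1 + 2 * t ≠ 0 := fun h => ht (by simp [h])
  convert (hasDerivAt_ratio hden).rpow_const (p := s) (Or.inl ht) using 1
  ring

lemma hasDerivAt_one_add_ratio_rpow_rpow (p r : ℝ) {t : ℝ}
    (ht : 0 < (1 - 2 * t) / (1 + 2 * t)) :
    HasDerivAt (fun x : ℝ => (1 + ((1 - 2 * x) / (1 + 2 * x)) ^ r) ^ (p - 1))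
      ((p - 1) * (1 + ((1 - 2 * t) / (1 + 2 * t)) ^ r) ^ (p - 2) *
        (r * ((1 - 2 * t) / (1 + 2 * t)) ^ (r - 1) * (-4 / (1 + 2 * t) ^ 2))) t := by
  have hbase : 1 + ((1 - 2 * t) / (1 + 2 * t)) ^ r ≠ 0 := by positivity
  convert ((hasDerivAt_ratio_rpow r ht.ne').const_add 1).rpow_const (p := p - 1)
    (Or.inl hbase) using 1
  ring_nf

lemma hasDerivAt_deriv_one_add_ratio_rpow_rpow_zero (p r : ℝ) :
    HasDerivAt (fun t : ℝ => (p - 1) * (1 + ((1 - 2 * t) / (1 + 2 * t)) ^ r) ^ (p - 2) *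
        (r * ((1 - 2 * t) / (1 + 2 * t)) ^ (r - 1) * (-4 / (1 + 2 * t) ^ 2)))
      (4 * p * (p - 1) * r ^ 2 * 2 ^ (p - 1)) 0 := by
  have h0 : ((1 : ℝ) - 2 * 0) / (1 + 2 * 0) ≠ 0 := by norm_num
  have hbase : (1 : ℝ) + ((1 - 2 * 0) / (1 + 2 * 0)) ^ r ≠ 0 := by norm_num
  have hA := ((hasDerivAt_ratio_rpow r h0).const_add 1).rpow_const (p := p - 2) (Or.inl hbase)
  have hB := (hasDerivAt_ratio_rpow (r - 1) h0).const_mul r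
  have hC : HasDerivAt (fun x : ℝ => -4 / (1 + 2 * x) ^ 2) 16 0 := by
    have hden := ((hasDerivAt_id' (0 : ℝ)).const_mul 2).const_add 1 |>.fun_pow 2
    refine ((hasDerivAt_const (0 : ℝ) (-4 : ℝ)).fun_div hden (by norm_num)).congr_deriv ?_
    norm_num
  refine ((hA.const_mul (p - 1)).fun_mul (hB.fun_mul hC)).congr_deriv ?_
  norm_num
  rw [Real.rpow_sub_one two_ne_zero, show p - 2 = p - 1 - 1 by ring,
    Real.rpow_sub_one two_ne_zero]
  ring

theorem stmt_8_general (p q l : ℝ) (hp1 : 1 < p) (hq : q = p / (p - 1)) :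
    (fun t : ℝ => (1 + (((1 - 2 * t) / (1 + 2 * t)) ^ (l / p)) ^ q) ^ (p - 1)
        - (2 : ℝ) ^ (p / q) * (1 - 2 * l * t + 2 * l ^ 2 * q * t ^ 2))
      =o[nhds 0] (fun t : ℝ => t ^ 2) := by
  have hp : p - 1 ≠ 0 := by linarith
  have hpq : p / q = p - 1 := by rw [hq]; field_simp
  set r := l / (p - 1)
  have hl : l = (p - 1) * r := by simp only [r]; field_simp
  have hu : ∀ᶠ t in 𝓝 (0 : ℝ), 0 < (1 - 2 * t) / (1 + 2 * t) := by
    filter_upwards [Ioo_mem_nhds (by norm_num : -(1 / 2 : ℝ) < 0) (by norm_num : (0 : ℝ) < 1 / 2)]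
      with t ⟨ht₁, ht₂⟩
    exact div_pos (by linarith) (by linarith)
  have hF := isLittleO_sub_taylor_two_of_hasDerivAt
    (hu.mono fun t ht => hasDerivAt_one_add_ratio_rpow_rpow p r ht)
    (hasDerivAt_deriv_one_add_ratio_rpow_rpow_zero p r)
  refine hF.congr' ?_ (by simp)
  filter_upwards [hu] with t hpos
  rw [← Real.rpow_mul hpos.le, hpq, show l / p * q = r by rw [hq, hl]; field_simp]
  norm_num
  rw [show p - 2 = p - 1 - 1 by ring, Real.rpow_sub_one two_ne_zero (p - 1), hl, hq]
  field_simp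
  ring

/-- Let `1 < p < 2` with conjugate exponent `q = p/(p−1)`, let
`θ ∈ [0,1]` and set `λ = 2θ − 1`.  For `t ∈ (−1/2, 1/2)` set
`δ_t = ((1 − 2t)/(1 + 2t))^(λ/p)`.  Then
`(1 + δ_t^q)^(p−1) = 2^(p/q)·(1 − 2λ·t + 2λ²q·t²) + o(t²)` as `t → 0`. -/
theorem stmt_8 (p q θ l : ℝ) (hp1 : 1 < p) (hp2 : p < 2) (hq : q = p / (p - 1))
    (hθ0 : 0 ≤ θ) (hθ1 : θ ≤ 1) (hl : l = 2 * θ - 1) :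
    (fun t : ℝ => (1 + (((1 - 2 * t) / (1 + 2 * t)) ^ (l / p)) ^ q) ^ (p - 1)
        - (2 : ℝ) ^ (p / q) * (1 - 2 * l * t + 2 * l ^ 2 * q * t ^ 2))
      =o[nhds 0] (fun t : ℝ => t ^ 2) :=
  stmt_8_general p q l hp1 hq
end

section
/- Let 1 < p < 2 with conjugate exponent q = p/(p−1), let θ ∈ [0,1] and set λ = 2θ − 1. For t ∈ (−1/2, 1/2) set c_t = 1/2 + t, δ_t = ((1 − 2t)/(1 + 2t))^{λ/p}, γ_t = (c_t(1−c_t))^{p/2}, and 𝔪_t = γ_t·(1 + δ_t^{−p})·(1 + δ_t^q)^{p−1}. Then 𝔪_t = 1 + α·t² + o(t²) as t → 0, where α = 2(λ²q − p). -/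
/-!
Second-order expansions at `0` propagate through sums, products and compositions by the usual
rules for 2-jets, hence through `log`, `exp` and real powers of positive functions. Since
`(1 - 2t)/(1 + 2t) = 1 - 4t + 8t² + o(t²)`, every power `((1 - 2t)/(1 + 2t))^s` equals
`1 - 4st + 8s²t² + o(t²)`. Multiplying the expansions of the three factors of `𝔪_t`, the linear
terms cancel because `(p - 1) q = p`, and the constant term is `(1/4)^(p/2) · 2 · 2^(p-1) = 1`.
-/

open Filter Asymptotics Topology

def HasQuadExpansion (f : ℝ → ℝ) (c a b : ℝ) : Prop :=
  (fun t => f t - (c + a * t + b * t ^ 2)) =o[𝓝 0] fun t => t ^ 2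

theorem hasQuadExpansion_quadratic (c a b : ℝ) :
    HasQuadExpansion (fun t => c + a * t + b * t ^ 2) c a b := by
  simp [HasQuadExpansion]

namespace HasQuadExpansion

variable {f g : ℝ → ℝ} {c a b c' a' b' : ℝ}

theorem congr_of_eventuallyEq (hf : HasQuadExpansion f c a b) (h : f =ᶠ[𝓝 0] g) :
    HasQuadExpansion g c a b :=
  hf.congr' (h.mono fun t ht => by simp only [ht]) EventuallyEq.rfl

theorem add (hf : HasQuadExpansion f c a b) (hg : HasQuadExpansion g c' a' b') :
    HasQuadExpansion (fun t => f t + g t) (c + c') (a + a') (b + b') :=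
  (IsLittleO.add hf hg).congr_left fun t => by ring

theorem const_add (hf : HasQuadExpansion f c a b) (k : ℝ) :
    HasQuadExpansion (fun t => k + f t) (k + c) a b := by
  simpa using (hasQuadExpansion_quadratic k 0 0).add hf

theorem const_mul (hf : HasQuadExpansion f c a b) (k : ℝ) :
    HasQuadExpansion (fun t => k * f t) (k * c) (k * a) (k * b) :=
  (hf.const_mul_left k).congr_left fun t => by ring

theorem tendsto (hf : HasQuadExpansion f c a b) : Tendsto f (𝓝 0) (𝓝 c) := by
  have hrem : Tendsto (fun t => f t - (c + a * t + b * t ^ 2)) (𝓝 0) (𝓝 0) :=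
    hf.trans_tendsto (by simpa using (continuous_pow 2).tendsto (0 : ℝ))
  have hpoly : Tendsto (fun t : ℝ => c + a * t + b * t ^ 2) (𝓝 0) (𝓝 c) :=
    (by fun_prop : Continuous fun t : ℝ => c + a * t + b * t ^ 2).tendsto' 0 c (by simp)
  simpa using hrem.add hpoly

theorem isBigO_id (hf : HasQuadExpansion f 0 a b) : f =O[𝓝 0] fun t => t := by
  have hsq : (fun t : ℝ => t ^ 2) =O[𝓝 0] fun t => t := (isLittleO_pow_id one_lt_two).isBigO
  have hpoly : (fun t : ℝ => a * t + b * t ^ 2) =O[𝓝 0] fun t => t :=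
    ((isBigO_refl _ _).const_mul_left a).add (hsq.const_mul_left b)
  simpa using ((IsLittleO.isBigO hf).trans hsq).add hpoly

theorem mul (hf : HasQuadExpansion f c a b) (hg : HasQuadExpansion g c' a' b') :
    HasQuadExpansion (fun t => f t * g t) (c * c') (c * a' + a * c')
      (c * b' + a * a' + b * c') := by
  set P : ℝ → ℝ := fun t => c + a * t + b * t ^ 2
  have hP : P =O[𝓝 0] fun _ => (1 : ℝ) :=
    ((by fun_prop : Continuous P).tendsto 0).isBigO_one ℝ
  -- the product of the two quadratic polynomials, minus its truncation at order 2
  have htail : (fun t : ℝ => t ^ 2 * ((a * b' + b * a') * t + b * b' * t ^ 2))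
      =o[𝓝 0] fun t => t ^ 2 := by
    refine (isBigO_refl _ _).mul_isLittleO ((isLittleO_one_iff ℝ).2 ?_) |>.congr_right
      fun t => mul_one _
    exact (by fun_prop : Continuous fun t : ℝ => (a * b' + b * a') * t + b * b' * t ^ 2).tendsto'
      0 0 (by simp)
  have hfg := hf.mul_isBigO (hg.tendsto.isBigO_one ℝ)
  have hPg := hP.mul_isLittleO hg
  simp only [mul_one, one_mul] at hfg hPg
  exact ((hfg.add hPg).add htail).congr_left fun t => by ring

theorem comp {Φ : ℝ → ℝ} {c₀ a₀ d : ℝ} (hΦ : HasQuadExpansion Φ c₀ a₀ d)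
    (hf : HasQuadExpansion f 0 a b) :
    HasQuadExpansion (fun t => Φ (f t)) c₀ (a₀ * a) (a₀ * b + d * a ^ 2) := by
  have hrem : (fun t => Φ (f t) - (c₀ + a₀ * f t + d * f t ^ 2)) =o[𝓝 0] fun t => t ^ 2 :=
    (hΦ.comp_tendsto hf.tendsto).trans_isBigO (hf.isBigO_id.pow 2)
  have hpoly := ((hf.const_mul a₀).add ((hf.mul hf).const_mul d)).const_add c₀
  simp only [mul_zero, zero_mul, add_zero, zero_add] at hpoly
  exact (hrem.add hpoly).congr_left fun t => by ring

end HasQuadExpansion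

theorem hasQuadExpansion_exp : HasQuadExpansion Real.exp 1 1 (1 / 2) := by
  have h := Real.exp_sub_sum_range_succ_isLittleO_pow 2
  simp only [Finset.sum_range_succ, Finset.sum_range_zero] at h
  refine h.congr_left fun t => ?_
  norm_num [Nat.factorial]
  ring

theorem hasQuadExpansion_log_one_add :
    HasQuadExpansion (fun y => Real.log (1 + y)) 0 1 (-1 / 2) := by
  refine IsBigO.trans_isLittleO ?_ (isLittleO_pow_pow (by norm_num : 2 < 3))
  refine isBigO_iff.2 ⟨2, ?_⟩
  filter_upwards [Metric.ball_mem_nhds (0 : ℝ) (by norm_num : (0 : ℝ) < 1 / 2)] with y hy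
  rw [Metric.mem_ball, Real.dist_eq, sub_zero] at hy
  simp only [Real.norm_eq_abs, abs_pow]
  calc |Real.log (1 + y) - (0 + 1 * y + -1 / 2 * y ^ 2)|
      = |∑ i ∈ Finset.range 2, (-y) ^ (i + 1) / (i + 1) + Real.log (1 - -y)| := by
        simp only [Finset.sum_range_succ, Finset.sum_range_zero, sub_neg_eq_add]
        ring_nf
    _ ≤ |y| ^ 3 / (1 - |y|) := by
        simpa using Real.abs_log_sub_add_sum_range_le (x := -y) (by rw [abs_neg]; linarith) 2
    _ ≤ 2 * |y| ^ 3 := by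
        rw [div_le_iff₀ (by linarith)]
        nlinarith [pow_nonneg (abs_nonneg y) 3]

namespace HasQuadExpansion

variable {f : ℝ → ℝ} {c a b : ℝ}

theorem exp (hf : HasQuadExpansion f c a b) :
    HasQuadExpansion (fun t => Real.exp (f t)) (Real.exp c) (Real.exp c * a)
      (Real.exp c * (b + a ^ 2 / 2)) := by
  have hcentered : HasQuadExpansion (fun t => -c + f t) 0 a b := by
    simpa using hf.const_add (-c)
  convert (hasQuadExpansion_exp.comp hcentered).const_mul (Real.exp c) using 1
  · ext t
    rw [← Real.exp_add]
    ring_nf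
  all_goals ring

theorem log (hf : HasQuadExpansion f c a b) (hc : 0 < c) :
    HasQuadExpansion (fun t => Real.log (f t)) (Real.log c) (a / c)
      (b / c - a ^ 2 / (2 * c ^ 2)) := by
  have hcentered : HasQuadExpansion (fun t => -1 + c⁻¹ * f t) 0 (c⁻¹ * a) (c⁻¹ * b) := by
    simpa [hc.ne'] using (hf.const_mul c⁻¹).const_add (-1)
  have hev : (fun t => Real.log c + Real.log (1 + (-1 + c⁻¹ * f t)))
      =ᶠ[𝓝 0] fun t => Real.log (f t) := by
    filter_upwards [hf.tendsto.eventually (eventually_gt_nhds hc)] with t ht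
    rw [add_neg_cancel_left, Real.log_mul (inv_ne_zero hc.ne') ht.ne', Real.log_inv,
      add_neg_cancel_left]
  convert ((hasQuadExpansion_log_one_add.comp hcentered).const_add
    (Real.log c)).congr_of_eventuallyEq hev using 1 <;> ring

theorem rpow (hf : HasQuadExpansion f c a b) (hc : 0 < c) (r : ℝ) :
    HasQuadExpansion (fun t => f t ^ r) (c ^ r) (c ^ r * (r * a / c))
      (c ^ r * (r * b / c + r * (r - 1) / 2 * (a / c) ^ 2)) := by
  have hev : (fun t => Real.exp (r * Real.log (f t))) =ᶠ[𝓝 0] fun t => f t ^ r := by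
    filter_upwards [hf.tendsto.eventually (eventually_gt_nhds hc)] with t ht
    rw [Real.rpow_def_of_pos ht, mul_comm]
  convert (((hf.log hc).const_mul r).exp).congr_of_eventuallyEq hev using 1
  all_goals rw [Real.rpow_def_of_pos hc, mul_comm (Real.log c)]
  all_goals ring

theorem rpow_of_one (hf : HasQuadExpansion f 1 a b) (r : ℝ) :
    HasQuadExpansion (fun t => f t ^ r) 1 (r * a) (r * b + r * (r - 1) / 2 * a ^ 2) := by
  simpa using hf.rpow one_pos r

end HasQuadExpansion

theorem hasQuadExpansion_one_sub_div_one_add (k : ℝ) :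
    HasQuadExpansion (fun t => (1 - k * t) / (1 + k * t)) 1 (-2 * k) (2 * k ^ 2) := by
  have h := ((hasQuadExpansion_quadratic 1 k 0).rpow_of_one (-1)).mul
    (hasQuadExpansion_quadratic 1 (-k) 0)
  simp only [Real.rpow_neg_one] at h
  convert h using 1
  · ext t
    ring
  all_goals ring

theorem hasQuadExpansion_half_add_mul_one_sub_rpow (r : ℝ) :
    HasQuadExpansion (fun t => ((1 / 2 + t) * (1 - (1 / 2 + t))) ^ r)
      ((1 / 4) ^ r) 0 (-4 * r * (1 / 4) ^ r) := by
  convert (hasQuadExpansion_quadratic (1 / 4) 0 (-1)).rpow (by norm_num) r using 1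
  · ext t
    ring_nf
  all_goals ring

theorem quarter_rpow_half_mul_two_rpow_sub_one (p : ℝ) :
    (1 / 4 : ℝ) ^ (p / 2) * 2 ^ (p - 1) = 1 / 2 := by
  have h4 : (4 : ℝ) ^ (p / 2) = 2 ^ p := by
    rw [show (4 : ℝ) = 2 ^ (2 : ℝ) by norm_num, ← Real.rpow_mul zero_le_two]
    ring_nf
  calc (1 / 4 : ℝ) ^ (p / 2) * 2 ^ (p - 1) = (1 / 4 : ℝ) ^ (p / 2) * 4 ^ (p / 2) / 2 := by
        rw [h4, Real.rpow_sub two_pos, Real.rpow_one]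
        ring
    _ = 1 / 2 := by
        rw [← Real.mul_rpow (by norm_num) (by norm_num)]
        norm_num

theorem stmt_9_general (p q l α : ℝ) (hp1 : 1 < p) (hq : q = p / (p - 1))
    (hα : α = 2 * (l ^ 2 * q - p)) :
    (fun t : ℝ => ((1 / 2 + t) * (1 - (1 / 2 + t))) ^ (p / 2)
          * (1 + (((1 - 2 * t) / (1 + 2 * t)) ^ (l / p)) ^ (-p))
          * (1 + (((1 - 2 * t) / (1 + 2 * t)) ^ (l / p)) ^ q) ^ (p - 1)
        - (1 + α * t ^ 2))
      =o[nhds 0] (fun t : ℝ => t ^ 2) := by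
  have hp : p ≠ 0 := (zero_lt_one.trans hp1).ne'
  have hp' : p - 1 ≠ 0 := sub_ne_zero.2 hp1.ne'
  have hδ := (hasQuadExpansion_one_sub_div_one_add 2).rpow_of_one (l / p)
  have hB : HasQuadExpansion (fun t => 1 + (((1 - 2 * t) / (1 + 2 * t)) ^ (l / p)) ^ (-p))
      2 (4 * l) (8 * l ^ 2) := by
    convert (hδ.rpow_of_one (-p)).const_add 1 using 1 <;> field_simp <;> ring
  have hC : HasQuadExpansion
      (fun t => (1 + (((1 - 2 * t) / (1 + 2 * t)) ^ (l / p)) ^ q) ^ (p - 1))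
      (2 ^ (p - 1)) (-2 * l * 2 ^ (p - 1)) (2 * l ^ 2 * q * 2 ^ (p - 1)) := by
    convert ((hδ.rpow_of_one q).const_add 1).rpow (by norm_num) (p - 1) using 1 <;> norm_num <;>
      rw [hq] <;> field_simp <;> ring
  have hm := ((hasQuadExpansion_half_add_mul_one_sub_rpow (p / 2)).mul hB).mul hC
  unfold HasQuadExpansion at hm
  convert hm using 3 with t
  linear_combination (-2 - 4 * (l ^ 2 * q - p) * t ^ 2) *
    quarter_rpow_half_mul_two_rpow_sub_one p + t ^ 2 * hα

/-- Let `1 < p < 2` with conjugate exponent `q = p/(p−1)`, let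
`θ ∈ [0,1]` and set `λ = 2θ − 1`.  For `t ∈ (−1/2, 1/2)` set `c_t = 1/2 + t`,
`δ_t = ((1 − 2t)/(1 + 2t))^(λ/p)`, `γ_t = (c_t(1−c_t))^(p/2)`, and
`𝔪_t = γ_t·(1 + δ_t^(−p))·(1 + δ_t^q)^(p−1)`.  Then `𝔪_t = 1 + α·t² + o(t²)` as
`t → 0`, where `α = 2(λ²q − p)`. -/
theorem stmt_9 (p q θ l α : ℝ) (hp1 : 1 < p) (hp2 : p < 2) (hq : q = p / (p - 1))
    (hθ0 : 0 ≤ θ) (hθ1 : θ ≤ 1) (hl : l = 2 * θ - 1) (hα : α = 2 * (l ^ 2 * q - p)) :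
    (fun t : ℝ => ((1 / 2 + t) * (1 - (1 / 2 + t))) ^ (p / 2)
          * (1 + (((1 - 2 * t) / (1 + 2 * t)) ^ (l / p)) ^ (-p))
          * (1 + (((1 - 2 * t) / (1 + 2 * t)) ^ (l / p)) ^ q) ^ (p - 1)
        - (1 + α * t ^ 2))
      =o[nhds 0] (fun t : ℝ => t ^ 2) :=
  stmt_9_general p q l α hp1 hq hα
end
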